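/- Let T be a tree, let v be any vertex of T with neighbors w_1,...,w_k, and for each i let l_i be the maximum number of vertices on a path in T - v starting at w_i. If Alice starts at v, then Bob, starting at a neighbor w_j achieving the maximum l_j, can guarantee a score of at least l_j, while Alice's score is at most l_j + 1. -/

import Mathlib

/-- A state of the Tron game: positions of the two players, the set of
vertices visited so far by either player, and the two scores. -/
structure TronState (V : Type) where
  posA : V
  posB : V
  visited : Finset V
  scoreA : ℕ
  scoreB : ℕ

/-- A player at `p` is stuck if every vertex it could move to is visited. -/
def TronStuck {V : Type} (R : V → V → Prop) (p : V) (vis : Finset V) : Prop :=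
  ∀ w, R p w → w ∈ vis

open Classical in
/-- Bob (second player) can force predicate `P` of the two final scores
(Alice's, Bob's), playing on the (possibly directed) edge relation `R`;
`turn = true` means Alice moves next.  A stuck player passes; the game ends
when both players are stuck. -/
def tronForceB {V : Type} [DecidableEq V] (R : V → V → Prop) (P : ℕ → ℕ → Prop) :
    ℕ → Bool → TronState V → Prop
  | 0, _, s => P s.scoreA s.scoreB
  | f + 1, true, s =>
      if TronStuck R s.posA s.visited then
        if TronStuck R s.posB s.visited then P s.scoreA s.scoreB
        else tronForceB R P f false s
      else
        ∀ w, R s.posA w → w ∉ s.visited →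
          tronForceB R P f false ⟨w, s.posB, insert w s.visited, s.scoreA + 1, s.scoreB⟩
  | f + 1, false, s =>
      if TronStuck R s.posB s.visited then
        if TronStuck R s.posA s.visited then P s.scoreA s.scoreB
        else tronForceB R P f true s
      else
        ∃ w, R s.posB w ∧ w ∉ s.visited ∧
          tronForceB R P f true ⟨s.posA, w, insert w s.visited, s.scoreA, s.scoreB + 1⟩

open Classical in
/-- Alice (first player) can force predicate `P` of the final scores. -/
def tronForceA {V : Type} [DecidableEq V] (R : V → V → Prop) (P : ℕ → ℕ → Prop) :
    ℕ → Bool → TronState V → Prop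
  | 0, _, s => P s.scoreA s.scoreB
  | f + 1, true, s =>
      if TronStuck R s.posA s.visited then
        if TronStuck R s.posB s.visited then P s.scoreA s.scoreB
        else tronForceA R P f false s
      else
        ∃ w, R s.posA w ∧ w ∉ s.visited ∧
          tronForceA R P f false ⟨w, s.posB, insert w s.visited, s.scoreA + 1, s.scoreB⟩
  | f + 1, false, s =>
      if TronStuck R s.posB s.visited then
        if TronStuck R s.posA s.visited then P s.scoreA s.scoreB
        else tronForceA R P f true s
      else
        ∀ w, R s.posB w → w ∉ s.visited →
          tronForceA R P f true ⟨s.posA, w, insert w s.visited, s.scoreA, s.scoreB + 1⟩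

open Classical in
/-- Every complete play of the game satisfies `P` of the final scores. -/
def tronInevitable {V : Type} [DecidableEq V] (R : V → V → Prop) (P : ℕ → ℕ → Prop) :
    ℕ → Bool → TronState V → Prop
  | 0, _, s => P s.scoreA s.scoreB
  | f + 1, true, s =>
      if TronStuck R s.posA s.visited then
        if TronStuck R s.posB s.visited then P s.scoreA s.scoreB
        else tronInevitable R P f false s
      else
        ∀ w, R s.posA w → w ∉ s.visited →
          tronInevitable R P f false ⟨w, s.posB, insert w s.visited, s.scoreA + 1, s.scoreB⟩
  | f + 1, false, s =>
      if TronStuck R s.posB s.visited then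
        if TronStuck R s.posA s.visited then P s.scoreA s.scoreB
        else tronInevitable R P f true s
      else
        ∀ w, R s.posB w → w ∉ s.visited →
          tronInevitable R P f true ⟨s.posA, w, insert w s.visited, s.scoreA, s.scoreB + 1⟩

/-- The initial state once Alice has started at `v` and Bob at `w`:
both vertices are visited, both scores are `1`, and Alice moves first. -/
def tronInit {V : Type} [DecidableEq V] (v w : V) : TronState V :=
  ⟨v, w, {v, w}, 1, 1⟩

/-- Enough fuel for any Tron game on `V` to finish. -/
def tronFuel (V : Type) [Fintype V] : ℕ := 2 * Fintype.card V + 2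

/-- In the Tron game on `G` (Alice picks a start vertex, then Bob picks a
different one, then they alternate, Alice first), Bob can force `P`. -/
def bobCanForce {V : Type} [Fintype V] [DecidableEq V] (G : SimpleGraph V)
    (P : ℕ → ℕ → Prop) : Prop :=
  ∀ v : V, ∃ w, w ≠ v ∧ tronForceB G.Adj P (tronFuel V) true (tronInit v w)

/-- In the Tron game on `G`, Alice can force `P`. -/
def aliceCanForce {V : Type} [Fintype V] [DecidableEq V] (G : SimpleGraph V)
    (P : ℕ → ℕ → Prop) : Prop :=
  ∃ v : V, ∀ w, w ≠ v → tronForceA G.Adj P (tronFuel V) true (tronInit v w)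

/-- The maximum number of vertices of a simple path in `H` starting at `u`. -/
noncomputable def maxPathFrom {W : Type} (H : SimpleGraph W) (u : W) : ℕ :=
  sSup {n | ∃ (x : W) (p : H.Walk u x), p.IsPath ∧ n = p.support.length}

/-!
Bob starts at the neighbour `w` of `v` maximising `l` and walks along a longest path of `T - v`
starting at `w`. That path lies in the component of `w` in `T - v`; since `T` is acyclic, `w` is
the only neighbour of `v` in this component, so Alice, who starts at `v` and finds `w` occupied,
can never enter it, and Bob completes his path of `l` vertices. Alice's own trail is `v` followed
by a path of `T - v` starting at some neighbour `u` of `v`, hence has at most `l_u + 1 ≤ l + 1`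
vertices.
-/

namespace TronState

variable {V : Type} [DecidableEq V]

abbrev moveA (s : TronState V) (y : V) : TronState V :=
  ⟨y, s.posB, insert y s.visited, s.scoreA + 1, s.scoreB⟩

abbrev moveB (s : TronState V) (y : V) : TronState V :=
  ⟨s.posA, y, insert y s.visited, s.scoreA, s.scoreB + 1⟩

end TronState

section Game

variable {V : Type} {R : V → V → Prop} {P : ℕ → ℕ → Prop}

lemma exists_move_of_not_tronStuck {p : V} {vis : Finset V} (h : ¬TronStuck R p vis) :
    ∃ y, R p y ∧ y ∉ vis := by
  simpa [TronStuck] using h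

variable [DecidableEq V]

theorem tronForceB_of_invariant (Inv : TronState V → Prop)
    (hA : ∀ s y, Inv s → R s.posA y → y ∉ s.visited → Inv (s.moveA y))
    (hB : ∀ s y, Inv s → R s.posB y → y ∉ s.visited → Inv (s.moveB y))
    (hP : ∀ s, Inv s → P s.scoreA s.scoreB) :
    ∀ fuel turn s, Inv s → tronForceB R P fuel turn s := by
  intro fuel
  induction fuel with
  | zero => rintro (_ | _) s hs <;> exact hP s hs
  | succ f ih =>
    rintro (_ | _) s hs <;> simp only [tronForceB]
    · split_ifs with hBstuck
      · exact hP s hs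
      · exact ih true s hs
      · obtain ⟨y, hy, hyv⟩ := exists_move_of_not_tronStuck hBstuck
        exact ⟨y, hy, hyv, ih true _ (hB s y hs hy hyv)⟩
    · split_ifs
      · exact hP s hs
      · exact ih false s hs
      · exact fun y hy hyv => ih false _ (hA s y hs hy hyv)

/-- Bob walks along the route `l` inside `S`, which Alice never enters; this takes
`2 * l.length` plies of fuel when Alice moves next, one fewer when Bob does. -/
theorem tronForceB_of_route {S : Set V} {L : ℕ} (Inv : TronState V → Prop)
    (hA : ∀ s y, Inv s → R s.posA y → y ∉ s.visited → y ∉ S ∧ Inv (s.moveA y))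
    (hB : ∀ s y, Inv s → R s.posB y → y ∉ s.visited → Inv (s.moveB y))
    (hP : ∀ s, Inv s → L ≤ s.scoreB → P s.scoreA s.scoreB) :
    ∀ fuel (turn : Bool) s (l : List V), Inv s → (s.posB :: l).IsChain R → l.Nodup →
      (∀ x ∈ l, x ∈ S ∧ x ∉ s.visited) → L ≤ s.scoreB + l.length →
      2 * l.length ≤ (if turn then fuel else fuel + 1) → tronForceB R P fuel turn s := by
  intro fuel
  induction fuel with
  | zero =>
    intro turn s l hs _ _ _ hL hfuel
    have hl : l.length = 0 := by split_ifs at hfuel <;> omega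
    cases turn <;> exact hP s hs (by simpa [hl] using hL)
  | succ f ih =>
    rintro turn s (_ | ⟨x, l⟩) hs hchain hnodup hl hL hfuel
    · exact tronForceB_of_invariant (fun s => Inv s ∧ L ≤ s.scoreB)
        (fun s y h hy hyv => ⟨(hA s y h.1 hy hyv).2, h.2⟩)
        (fun s y h hy hyv => ⟨hB s y h.1 hy hyv, Nat.le_succ_of_le h.2⟩)
        (fun s h => hP s h.1 h.2) _ turn s ⟨hs, by simpa using hL⟩
    obtain ⟨hx, hchain'⟩ := List.isChain_cons_cons.mp hchain
    obtain ⟨hxl, hnodup'⟩ := List.nodup_cons.mp hnodup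
    have hxfree : x ∉ s.visited := (hl x List.mem_cons_self).2
    have hBfree : ¬TronStuck R s.posB s.visited := fun h => hxfree (h x hx)
    cases turn with
    | false =>
      simp only [tronForceB, if_neg hBfree]
      refine ⟨x, hx, hxfree, ih true _ l (hB s x hs hx hxfree) hchain' hnodup'
        (fun z hz => ⟨(hl z (List.mem_cons_of_mem x hz)).1, fun h => (Finset.mem_insert.mp h).elim
          (ne_of_mem_of_not_mem hz hxl) (hl z (List.mem_cons_of_mem x hz)).2⟩) ?_ ?_⟩
      · simp only [List.length_cons] at hL ⊢
        omega
      · simp only [List.length_cons, Bool.false_eq_true, ↓reduceIte] at hfuel ⊢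
        omega
    | true =>
      have hfuel' : 2 * (x :: l).length ≤ f + 1 := by simpa using hfuel
      simp only [tronForceB]
      split_ifs
      · exact ih false s (x :: l) hs hchain hnodup hl hL (by simpa using hfuel')
      · intro y hy hyv
        obtain ⟨hyS, hs'⟩ := hA s y hs hy hyv
        exact ih false _ (x :: l) hs' hchain hnodup (fun z hz => ⟨(hl z hz).1, fun h =>
          (Finset.mem_insert.mp h).elim (ne_of_mem_of_not_mem (hl z hz).1 hyS) (hl z hz).2⟩)
          hL (by simpa using hfuel')

end Game

namespace SimpleGraph

section MaxPath

variable {W : Type} [Finite W] (H : SimpleGraph W) (u : W)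

lemma bddAbove_pathSupportLengths :
    BddAbove {n | ∃ (x : W) (p : H.Walk u x), p.IsPath ∧ n = p.support.length} := by
  have := Fintype.ofFinite W
  refine ⟨Fintype.card W, ?_⟩
  rintro n ⟨x, p, hp, rfl⟩
  exact hp.support_nodup.length_le_card

variable {H u} in
lemma Walk.IsPath.support_length_le_maxPathFrom {x : W} {p : H.Walk u x} (hp : p.IsPath) :
    p.support.length ≤ maxPathFrom H u :=
  le_csSup (bddAbove_pathSupportLengths H u) ⟨x, p, hp, rfl⟩

lemma exists_isPath_support_length_eq_maxPathFrom :
    ∃ (x : W) (p : H.Walk u x), p.IsPath ∧ p.support.length = maxPathFrom H u := by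
  obtain ⟨x, p, hp, h⟩ : maxPathFrom H u ∈ _ :=
    Nat.sSup_mem ⟨1, u, Walk.nil, Walk.IsPath.nil, rfl⟩ (bddAbove_pathSupportLengths H u)
  exact ⟨x, p, hp, h.symm⟩

end MaxPath

variable {V : Type} {T : SimpleGraph V} {v w : V}

lemma Walk.IsPath.support_length_le_succ_of_maxPathFrom_adj_le [Finite V] {L : ℕ}
    (hmax : ∀ u (hu : T.Adj v u), maxPathFrom (T.induce {x | x ≠ v}) ⟨u, hu.ne'⟩ ≤ L)
    {a : V} {q : T.Walk v a} (hq : q.IsPath) : q.support.length ≤ L + 1 := by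
  cases q with
  | nil => simp
  | @cons _ u _ hu q =>
    have hqv : ∀ x ∈ q.support, x ∈ {x | x ≠ v} := fun x hx h =>
      (cons_isPath_iff _ _ |>.mp hq).2 (h ▸ hx)
    have hpath : (q.induce _ hqv).IsPath :=
      IsPath.of_map (f := (Embedding.induce _).toHom) (by rw [map_induce]; exact hq.of_cons)
    simpa using hpath.support_length_le_maxPathFrom.trans (hmax u hu)

def branch (T : SimpleGraph V) (v w : V) (hw : w ≠ v) : Set V :=
  {x | ∃ hx : x ≠ v, (T.induce {y | y ≠ v}).Reachable ⟨w, hw⟩ ⟨x, hx⟩}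

lemma mem_branch_of_adj {hw : w ≠ v} {x y : V} (hx : x ∈ T.branch v w hw) (hxy : T.Adj x y)
    (hy : y ≠ v) : y ∈ T.branch v w hw :=
  ⟨hy, hx.2.trans (Adj.reachable (G := T.induce {y | y ≠ v}) (u := ⟨x, hx.1⟩) (v := ⟨y, hy⟩) hxy)⟩

lemma IsAcyclic.eq_of_adj_of_mem_branch (hT : T.IsAcyclic) (hw : T.Adj v w) {u : V}
    (hu : T.Adj v u) (hub : u ∈ T.branch v w hw.ne') : u = w := by
  obtain ⟨_, hreach⟩ := hub
  obtain ⟨q⟩ := hreach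
  have hvq : v ∉ (q.map (Embedding.induce _).toHom).reverse.support := by
    simp only [Walk.support_reverse, List.mem_reverse, Walk.support_map, List.mem_map, not_exists,
      not_and]
    exact fun z _ => z.2
  -- `s(v, w)` is a bridge, yet the walk `v → u ⇝ w` avoids it unless `u = w`.
  have hbridge := isBridge_iff_forall_walk_mem_edges.mp (isAcyclic_iff_forall_adj_isBridge.mp hT hw)
    (Walk.cons hu (q.map (Embedding.induce _).toHom).reverse)
  rcases List.mem_cons.mp hbridge with h | h
  · exact (Sym2.congr_right.mp h).symm
  · exact absurd (Walk.fst_mem_support_of_mem_edges _ h) hvq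

lemma IsAcyclic.not_mem_branch_of_adj (hT : T.IsAcyclic) (hw : T.Adj v w) {a y : V}
    (ha : a ∉ T.branch v w hw.ne') (hay : T.Adj a y) (hyv : y ≠ v) (hyw : y ≠ w) :
    y ∉ T.branch v w hw.ne' := by
  intro hy
  by_cases hav : a = v
  · subst hav
    exact hyw (hT.eq_of_adj_of_mem_branch hw hay hy)
  · exact ha (mem_branch_of_adj hy hay.symm hav)

lemma exists_route_in_branch [Finite V] (hw : w ≠ v) :
    ∃ l : List V, (w :: l).IsChain T.Adj ∧ (w :: l).Nodup ∧ (∀ x ∈ l, x ∈ T.branch v w hw) ∧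
      maxPathFrom (T.induce {x | x ≠ v}) ⟨w, hw⟩ = l.length + 1 := by
  obtain ⟨x, p, hp, hlen⟩ :=
    exists_isPath_support_length_eq_maxPathFrom (T.induce {x | x ≠ v}) ⟨w, hw⟩
  let pT := p.map (Embedding.induce {x | x ≠ v}).toHom
  have hsupp : pT.support = w :: pT.support.tail := pT.cons_tail_support.symm
  refine ⟨pT.support.tail, hsupp ▸ pT.isChain_adj_support,
    hsupp ▸ (hp.map (f := (Embedding.induce _).toHom) Subtype.val_injective).support_nodup, ?_, ?_⟩
  · classical
    intro y hy
    obtain ⟨z, hz, rfl⟩ := List.mem_map.mp (Walk.support_map _ p ▸ List.mem_of_mem_tail hy)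
    exact ⟨z.2, ⟨p.takeUntil z hz⟩⟩
  · rw [← hlen, List.length_tail, Walk.support_map, List.length_map]
    have := p.support.length_pos_of_mem p.start_mem_support
    omega

end SimpleGraph

section AliceTrail

open SimpleGraph

variable {V : Type} {T : SimpleGraph V} {v : V} {s : TronState V}

/-- Invariant of every play in which Alice started at `v`. -/
def AliceTrail (T : SimpleGraph V) (v : V) (s : TronState V) : Prop :=
  ∃ q : T.Walk v s.posA, q.IsPath ∧ q.support.length = s.scoreA ∧ ∀ z ∈ q.support, z ∈ s.visited

lemma aliceTrail_tronInit [DecidableEq V] (v w : V) : AliceTrail T v (tronInit v w) :=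
  ⟨Walk.nil, Walk.IsPath.nil, rfl, by simp [tronInit]⟩

namespace AliceTrail

lemma start_mem_visited (h : AliceTrail T v s) : v ∈ s.visited := by
  obtain ⟨q, -, -, hq⟩ := h
  exact hq v q.start_mem_support

lemma moveA [DecidableEq V] {y : V} (h : AliceTrail T v s) (hy : T.Adj s.posA y)
    (hyv : y ∉ s.visited) : AliceTrail T v (s.moveA y) := by
  obtain ⟨q, hq, hlen, hvis⟩ := h
  refine ⟨q.concat hy, hq.concat (fun h => hyv (hvis y h)) hy, ?_, ?_⟩
  · simp [Walk.support_concat, hlen]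
  · simp only [Walk.support_concat, List.mem_append, List.mem_singleton]
    rintro z (hz | rfl)
    · exact Finset.mem_insert_of_mem (hvis z hz)
    · exact Finset.mem_insert_self _ _

lemma moveB [DecidableEq V] {y : V} (h : AliceTrail T v s) : AliceTrail T v (s.moveB y) := by
  obtain ⟨q, hq, hlen, hvis⟩ := h
  exact ⟨q, hq, hlen, fun z hz => Finset.mem_insert_of_mem (hvis z hz)⟩

lemma scoreA_le [Finite V] {L : ℕ}
    (hmax : ∀ u (hu : T.Adj v u), maxPathFrom (T.induce {x | x ≠ v}) ⟨u, hu.ne'⟩ ≤ L)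
    (h : AliceTrail T v s) : s.scoreA ≤ L + 1 := by
  obtain ⟨q, hq, hlen, -⟩ := h
  exact hlen ▸ hq.support_length_le_succ_of_maxPathFrom_adj_le hmax

end AliceTrail

end AliceTrail

open SimpleGraph in
/-- If Alice starts at `v` in a tree `T`, then Bob, starting
at a neighbour `w` of `v` maximizing the longest path from `w` in `T - v`
(with `l` vertices), can guarantee a score of at least `l` while forcing
Alice's score to be at most `l + 1`. -/
theorem tron_tree_bob_neighbour_strategy
    {V : Type} [Fintype V] [DecidableEq V] (T : SimpleGraph V)
    (hconn : T.Connected) (hacyc : T.IsAcyclic) (hcard : 2 ≤ Fintype.card V)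
    (v : V) :
    ∃ w, ∃ hw : T.Adj v w,
      (∀ u, (hu : T.Adj v u) →
        maxPathFrom (T.induce {x | x ≠ v}) ⟨u, hu.ne'⟩ ≤
          maxPathFrom (T.induce {x | x ≠ v}) ⟨w, hw.ne'⟩) ∧
      tronForceB T.Adj
        (fun a b => maxPathFrom (T.induce {x | x ≠ v}) ⟨w, hw.ne'⟩ ≤ b ∧
          a ≤ maxPathFrom (T.induce {x | x ≠ v}) ⟨w, hw.ne'⟩ + 1)
        (tronFuel V) true (tronInit v w) := by
  have : Nontrivial V := Fintype.one_lt_card_iff_nontrivial.mp hcard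
  obtain ⟨u₀, hu₀⟩ := hconn.preconnected.exists_adj_of_nontrivial v
  have : Nonempty {u // T.Adj v u} := ⟨⟨u₀, hu₀⟩⟩
  obtain ⟨⟨w, hw⟩, hwmax⟩ := Finite.exists_max fun u : {u // T.Adj v u} =>
    maxPathFrom (T.induce {x | x ≠ v}) ⟨u, u.2.ne'⟩
  have hmax := fun u hu => hwmax ⟨u, hu⟩
  refine ⟨w, hw, hmax, ?_⟩
  obtain ⟨l, hchain, hnodup, hlS, hlen⟩ := exists_route_in_branch (T := T) hw.ne'
  obtain ⟨hwl, hnodup'⟩ := List.nodup_cons.mp hnodup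
  refine tronForceB_of_route (S := T.branch v w hw.ne')
    (L := maxPathFrom (T.induce {x | x ≠ v}) ⟨w, hw.ne'⟩)
    (fun s => w ∈ s.visited ∧ s.posA ∉ T.branch v w hw.ne' ∧ AliceTrail T v s) ?_ ?_ ?_
    _ true _ l ⟨by simp [tronInit], fun h => h.1 rfl, aliceTrail_tronInit v w⟩ hchain hnodup'
    (fun x hx => ⟨hlS x hx, ?_⟩) ?_ ?_
  · rintro s y ⟨hws, ha, htrail⟩ hy hyv
    have hyS := hacyc.not_mem_branch_of_adj hw ha hy
      (fun h => hyv (h ▸ htrail.start_mem_visited)) (fun h => hyv (h ▸ hws))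
    exact ⟨hyS, Finset.mem_insert_of_mem hws, hyS, htrail.moveA hy hyv⟩
  · rintro s y ⟨hws, ha, htrail⟩ - -
    exact ⟨Finset.mem_insert_of_mem hws, ha, htrail.moveB⟩
  · rintro s ⟨-, -, htrail⟩ hL
    exact ⟨hL, htrail.scoreA_le hmax⟩
  · simp only [tronInit, Finset.mem_insert, Finset.mem_singleton, not_or]
    exact ⟨(hlS x hx).1, ne_of_mem_of_not_mem hx hwl⟩
  · simp only [tronInit]
    omega
  · have := hnodup'.length_le_card
    simp only [tronFuel, if_true]
    omega
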